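/- arXiv:2603.25685 — 2 statements merged into one kernel-verified Lean document; each statement's English description precedes it below -/
import Mathlib

section
/- For every v ∈ ℝ^d, the reward-contrasted loss admits the closed form F(v) = β² ‖v − (μ° + (2/β) Δ)‖² + C, where the constant C = α ∫ ‖x − μ⁺‖² dp⁺(x) + (1 − α) ∫ ‖x − μ⁻‖² dp⁻(x) + ‖Δ‖² / (α (1 − α)) − 4 ‖Δ‖² does not depend on v. -/
open MeasureTheory
open scoped InnerProductSpace

lemma aux_int_id {d : ℕ} (p : Measure (EuclideanSpace ℝ (Fin d)))
    [IsProbabilityMeasure p] (h2 : Integrable (fun x => ‖x‖ ^ 2) p) :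
    Integrable (fun x => x) p := by
  refine Integrable.mono' (g := fun x => 1 + ‖x‖ ^ 2)
    ((integrable_const 1).add h2) aestronglyMeasurable_id ?_
  filter_upwards with x
  have h := norm_nonneg x
  rcases le_total ‖x‖ 1 with h1 | h1 <;> nlinarith

lemma variance_decomp {d : ℕ} (p : Measure (EuclideanSpace ℝ (Fin d)))
    [IsProbabilityMeasure p] (h2 : Integrable (fun x => ‖x‖ ^ 2) p)
    (c μ : EuclideanSpace ℝ (Fin d)) (hμ : μ = ∫ x, x ∂p) :
    ∫ x, ‖c - x‖ ^ 2 ∂p = ‖c - μ‖ ^ 2 + ∫ x, ‖x - μ‖ ^ 2 ∂p := by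
  have hid := aux_int_id p h2
  have hsub : Integrable (fun x => μ - x) p := (integrable_const μ).sub hid
  have hinner : Integrable (fun x => 2 * ⟪c - μ, μ - x⟫_ℝ) p :=
    (hsub.const_inner (c - μ)).const_mul 2
  have hnsq : Integrable (fun x => ‖x - μ‖ ^ 2) p := by
    refine Integrable.mono' (g := fun x => 2 * ‖x‖ ^ 2 + 2 * ‖μ‖ ^ 2)
      ((h2.const_mul 2).add (integrable_const _)) ?_ ?_
    · exact (Continuous.norm (by continuity)).pow 2 |>.aestronglyMeasurable
    · filter_upwards with x
      have h := norm_sub_le x μ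
      have h0 := norm_nonneg (x - μ)
      have h2' : ‖x - μ‖ ^ 2 ≤ (‖x‖ + ‖μ‖) ^ 2 := pow_le_pow_left₀ h0 h 2
      rw [Real.norm_eq_abs, abs_of_nonneg (by positivity)]
      nlinarith [sq_nonneg (‖x‖ - ‖μ‖)]
  have hsum : Integrable (fun x => 2 * ⟪c - μ, μ - x⟫_ℝ + ‖x - μ‖ ^ 2) p :=
    hinner.add hnsq
  have key : ∀ x : EuclideanSpace ℝ (Fin d),
      ‖c - x‖ ^ 2 = ‖c - μ‖ ^ 2 + (2 * ⟪c - μ, μ - x⟫_ℝ + ‖x - μ‖ ^ 2) := by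
    intro x
    have hx : c - x = (c - μ) + (μ - x) := by abel
    rw [hx, norm_add_sq_real, norm_sub_rev μ x]
    ring
  calc ∫ x, ‖c - x‖ ^ 2 ∂p
      = ∫ x, (‖c - μ‖ ^ 2 + (2 * ⟪c - μ, μ - x⟫_ℝ + ‖x - μ‖ ^ 2)) ∂p :=
        integral_congr_ae (Filter.Eventually.of_forall key)
    _ = ‖c - μ‖ ^ 2 + ((2 : ℝ) * ⟪c - μ, μ - ∫ x, x ∂p⟫_ℝ + ∫ x, ‖x - μ‖ ^ 2 ∂p) := by
        rw [integral_add (integrable_const _) hsum,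
          integral_add hinner hnsq, integral_const, integral_const_mul,
          integral_inner hsub, integral_sub (integrable_const μ) hid, integral_const]
        simp
    _ = ‖c - μ‖ ^ 2 + ∫ x, ‖x - μ‖ ^ 2 ∂p := by
        rw [← hμ]
        simp

lemma expand_smul_sub_sq {d : ℕ} (s t : ℝ) (a b : EuclideanSpace ℝ (Fin d)) :
    ‖s • a - t • b‖ ^ 2
      = s ^ 2 * ‖a‖ ^ 2 - 2 * (s * t) * ⟪a, b⟫_ℝ + t ^ 2 * ‖b‖ ^ 2 := by
  rw [norm_sub_sq_real, norm_smul, norm_smul, real_inner_smul_left,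
    real_inner_smul_right, mul_pow, mul_pow, Real.norm_eq_abs, Real.norm_eq_abs,
    sq_abs, sq_abs]
  ring

/-- For every `v ∈ ℝ^d`, the reward-contrasted loss admits the closed
form `F(v) = β² ‖v − (μ° + (2/β) Δ)‖² + C`, where the constant
`C = α ∫ ‖x − μ⁺‖² dp⁺(x) + (1 − α) ∫ ‖x − μ⁻‖² dp⁻(x) + ‖Δ‖² / (α (1 − α)) − 4 ‖Δ‖²`
does not depend on `v`. -/
theorem reward_contrasted_loss_closed_form
    (d : ℕ) (hd : 1 ≤ d)
    (pplus pminus : Measure (EuclideanSpace ℝ (Fin d)))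
    [IsProbabilityMeasure pplus] [IsProbabilityMeasure pminus]
    (h2plus : Integrable (fun x => ‖x‖ ^ 2) pplus)
    (h2minus : Integrable (fun x => ‖x‖ ^ 2) pminus)
    (μplus μminus : EuclideanSpace ℝ (Fin d))
    (hμplus : μplus = ∫ x, x ∂pplus)
    (hμminus : μminus = ∫ x, x ∂pminus)
    (α β : ℝ) (hα0 : 0 < α) (hα1 : α < 1) (hβ : 0 < β)
    (μmid Δ : EuclideanSpace ℝ (Fin d))
    (hμmid : μmid = α • μplus + (1 - α) • μminus)
    (hΔ : Δ = α • (μplus - μmid))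
    (F : EuclideanSpace ℝ (Fin d) → ℝ)
    (hF : ∀ v, F v =
      α * ∫ x, ‖(1 - β) • μmid + β • v - x‖ ^ 2 ∂pplus +
      (1 - α) * ∫ x, ‖(1 + β) • μmid - β • v - x‖ ^ 2 ∂pminus) :
    ∀ v, F v = β ^ 2 * ‖v - (μmid + (2 / β) • Δ)‖ ^ 2 +
      (α * ∫ x, ‖x - μplus‖ ^ 2 ∂pplus +
       (1 - α) * ∫ x, ‖x - μminus‖ ^ 2 ∂pminus +
       ‖Δ‖ ^ 2 / (α * (1 - α)) - 4 * ‖Δ‖ ^ 2) := by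
  intro v
  have hβ' : (β : ℝ) ≠ 0 := ne_of_gt hβ
  have hα' : (α : ℝ) ≠ 0 := ne_of_gt hα0
  have h1α : (1 - α : ℝ) ≠ 0 := by linarith
  have hΔ' : Δ = (α * (1 - α)) • (μplus - μminus) := by
    rw [hΔ, hμmid]; module
  have e1 : ∀ x, (1 - β) • μmid + β • v - x
      = β • (v - μmid) - (1 - α) • (μplus - μminus) + (μplus - x) := by
    intro x; rw [hμmid]; module
  have e2 : ∀ x, (1 + β) • μmid - β • v - x
      = -(β • (v - μmid) - α • (μplus - μminus)) + (μminus - x) := by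
    intro x; rw [hμmid]; module
  have hI1 : ∫ x, ‖(1 - β) • μmid + β • v - x‖ ^ 2 ∂pplus
      = ‖β • (v - μmid) - (1 - α) • (μplus - μminus)‖ ^ 2
        + ∫ x, ‖x - μplus‖ ^ 2 ∂pplus := by
    have := variance_decomp pplus h2plus
      (β • (v - μmid) - (1 - α) • (μplus - μminus) + μplus) μplus hμplus
    simp only [add_sub_cancel_right] at this
    rw [← this]
    refine integral_congr_ae (Filter.Eventually.of_forall fun x => ?_)
    show ‖(1 - β) • μmid + β • v - x‖ ^ 2
      = ‖β • (v - μmid) - (1 - α) • (μplus - μminus) + μplus - x‖ ^ 2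
    rw [e1 x]; congr 1; abel
  have hI2 : ∫ x, ‖(1 + β) • μmid - β • v - x‖ ^ 2 ∂pminus
      = ‖β • (v - μmid) - α • (μplus - μminus)‖ ^ 2
        + ∫ x, ‖x - μminus‖ ^ 2 ∂pminus := by
    have := variance_decomp pminus h2minus
      (-(β • (v - μmid) - α • (μplus - μminus)) + μminus) μminus hμminus
    simp only [add_sub_cancel_right, norm_neg] at this
    rw [← this]
    refine integral_congr_ae (Filter.Eventually.of_forall fun x => ?_)
    show ‖(1 + β) • μmid - β • v - x‖ ^ 2
      = ‖-(β • (v - μmid) - α • (μplus - μminus)) + μminus - x‖ ^ 2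
    rw [e2 x]; congr 1; abel
  have hv : β ^ 2 * ‖v - (μmid + (2 / β) • Δ)‖ ^ 2
      = ‖β • (v - μmid) - (2 * (α * (1 - α))) • (μplus - μminus)‖ ^ 2 := by
    have : β • (v - (μmid + (2 / β) • Δ))
        = β • (v - μmid) - (2 * (α * (1 - α))) • (μplus - μminus) := by
      rw [hΔ']
      have : β • ((2 / β) • ((α * (1 - α)) • (μplus - μminus)))
          = (2 * (α * (1 - α))) • (μplus - μminus) := by
        rw [smul_smul, smul_smul]; congr 1; field_simp
      rw [smul_sub, smul_add, ← this]
      module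
    rw [← this, norm_smul, mul_pow, Real.norm_eq_abs, sq_abs]
  have hΔn : ‖Δ‖ ^ 2 = (α * (1 - α)) ^ 2 * ‖μplus - μminus‖ ^ 2 := by
    rw [hΔ', norm_smul, mul_pow, Real.norm_eq_abs, sq_abs]
  rw [hF v, hI1, hI2, hv, hΔn,
    expand_smul_sub_sq β (1 - α) (v - μmid) (μplus - μminus),
    expand_smul_sub_sq β α (v - μmid) (μplus - μminus),
    expand_smul_sub_sq β (2 * (α * (1 - α))) (v - μmid) (μplus - μminus)]
  field_simp
  ring
end

section
/- (Optimal predictor theorem, pointwise form.) The reward-contrasted loss F has a unique global minimizer at v* = μ° + (2/β) Δ: for every v ∈ ℝ^d one has F(v*) ≤ F(v), with equality if and only if v = v*. -/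
/-!
Both integrals in `F` obey the bias–variance identity `∫ ‖c - x‖² dp = ‖c - μ‖² + ∫ ‖μ - x‖² dp`,
so up to a constant `F v = α ‖X + β w‖² + (1 - α) ‖Y - β w‖²`, where `w = v - v*` and `X`, `Y`
are the two biases at `v*`. The choice of `v*` is exactly what makes `α X = (1 - α) Y`, which
kills the cross terms: `F v = F v* + β² ‖v - v*‖²`.
-/

open MeasureTheory

theorem integrable_id_of_integrable_norm_sq {E : Type*} [NormedAddCommGroup E]
    [MeasurableSpace E] [BorelSpace E] [SecondCountableTopology E] {p : Measure E}
    [IsFiniteMeasure p] (h2 : Integrable (fun x => ‖x‖ ^ 2) p) :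
    Integrable (fun x => x) p :=
  ((memLp_two_iff_integrable_sq_norm aestronglyMeasurable_id).2 h2).integrable one_le_two

section BiasVariance

variable {E : Type*} [NormedAddCommGroup E] [InnerProductSpace ℝ E] [CompleteSpace E]
  [MeasurableSpace E] [BorelSpace E] [SecondCountableTopology E]
  (p : Measure E) [IsProbabilityMeasure p]

theorem integral_norm_sub_sq (h2 : Integrable (fun x => ‖x‖ ^ 2) p) (c : E) :
    ∫ x, ‖c - x‖ ^ 2 ∂p = ‖c‖ ^ 2 - 2 * inner ℝ c (∫ x, x ∂p) + ∫ x, ‖x‖ ^ 2 ∂p := by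
  have hid := integrable_id_of_integrable_norm_sq h2
  have hinner : Integrable (fun x => 2 * inner ℝ c x) p := (hid.const_inner c).const_mul 2
  simp only [norm_sub_sq_real]
  rw [integral_add (f := fun x => ‖c‖ ^ 2 - 2 * inner ℝ c x) ((integrable_const _).sub hinner) h2,
    integral_sub (integrable_const _) hinner,
    integral_const_mul, integral_inner hid, integral_const, probReal_univ, one_smul]

theorem integral_norm_sub_sq_eq_norm_sub_integral_sq_add
    (h2 : Integrable (fun x => ‖x‖ ^ 2) p) (c : E) :
    ∫ x, ‖c - x‖ ^ 2 ∂p = ‖c - ∫ x, x ∂p‖ ^ 2 + ∫ x, ‖(∫ y, y ∂p) - x‖ ^ 2 ∂p := by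
  rw [integral_norm_sub_sq p h2, integral_norm_sub_sq p h2, norm_sub_sq_real,
    real_inner_self_eq_norm_sq]
  ring

end BiasVariance

theorem weighted_norm_sq_add_sub_of_smul_eq {E : Type*} [NormedAddCommGroup E]
    [InnerProductSpace ℝ E] {α : ℝ} {X Y : E} (h : α • X = (1 - α) • Y) (w : E) :
    α * ‖X + w‖ ^ 2 + (1 - α) * ‖Y - w‖ ^ 2 = α * ‖X‖ ^ 2 + (1 - α) * ‖Y‖ ^ 2 + ‖w‖ ^ 2 := by
  have hcross : α * inner ℝ X w = (1 - α) * inner ℝ Y w := by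
    rw [← real_inner_smul_left, h, real_inner_smul_left]
  rw [norm_add_sq_real, norm_sub_sq_real]
  linear_combination 2 * hcross

theorem optimal_predictor_general
    (d : ℕ)
    (pplus pminus : Measure (EuclideanSpace ℝ (Fin d)))
    [IsProbabilityMeasure pplus] [IsProbabilityMeasure pminus]
    (h2plus : Integrable (fun x => ‖x‖ ^ 2) pplus)
    (h2minus : Integrable (fun x => ‖x‖ ^ 2) pminus)
    (μplus μminus : EuclideanSpace ℝ (Fin d))
    (hμplus : μplus = ∫ x, x ∂pplus)
    (hμminus : μminus = ∫ x, x ∂pminus)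
    (α β : ℝ) (hβ : 0 < β)
    (μmid Δ : EuclideanSpace ℝ (Fin d))
    (hμmid : μmid = α • μplus + (1 - α) • μminus)
    (hΔ : Δ = α • (μplus - μmid))
    (F : EuclideanSpace ℝ (Fin d) → ℝ)
    (hF : ∀ v, F v =
      α * ∫ x, ‖(1 - β) • μmid + β • v - x‖ ^ 2 ∂pplus +
      (1 - α) * ∫ x, ‖(1 + β) • μmid - β • v - x‖ ^ 2 ∂pminus)
    (vstar : EuclideanSpace ℝ (Fin d))
    (hvstar : vstar = μmid + (2 / β) • Δ) :
    ∀ v, F vstar ≤ F v ∧ (F v = F vstar ↔ v = vstar) := by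
  intro v
  set X := (1 - β) • μmid + β • vstar - μplus
  set Y := (1 + β) • μmid - β • vstar - μminus
  set C := α * ∫ x, ‖μplus - x‖ ^ 2 ∂pplus + (1 - α) * ∫ x, ‖μminus - x‖ ^ 2 ∂pminus
  have hF_eq : ∀ u, F u =
      α * ‖X + β • (u - vstar)‖ ^ 2 + (1 - α) * ‖Y - β • (u - vstar)‖ ^ 2 + C := by
    intro u
    have hX : (1 - β) • μmid + β • u - μplus = X + β • (u - vstar) := by simp only [X]; module
    have hY : (1 + β) • μmid - β • u - μminus = Y - β • (u - vstar) := by simp only [Y]; module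
    rw [hF, integral_norm_sub_sq_eq_norm_sub_integral_sq_add pplus h2plus,
      integral_norm_sub_sq_eq_norm_sub_integral_sq_add pminus h2minus, ← hμplus,
      ← hμminus, hX, hY]
    ring
  have hXY : α • X = (1 - α) • Y := by
    simp only [X, Y, hvstar, hΔ, hμmid]
    match_scalars <;> field_simp <;> ring
  have hF_sub : F v = F vstar + ‖β • (v - vstar)‖ ^ 2 := by
    rw [hF_eq, hF_eq, weighted_norm_sq_add_sub_of_smul_eq hXY, sub_self, smul_zero, add_zero,
      sub_zero]
    ring
  refine ⟨hF_sub ▸ le_add_of_nonneg_right (by positivity), ?_⟩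
  rw [hF_sub, add_eq_left, pow_eq_zero_iff two_ne_zero, norm_eq_zero, smul_eq_zero, sub_eq_zero]
  exact or_iff_right hβ.ne'

/-- **Optimal predictor theorem, pointwise form.** The reward-contrasted
loss `F` has a unique global minimizer at `v* = μ° + (2/β) Δ`: for every `v ∈ ℝ^d` one has
`F(v*) ≤ F(v)`, with equality if and only if `v = v*`. -/
theorem optimal_predictor
    (d : ℕ) (hd : 1 ≤ d)
    (pplus pminus : Measure (EuclideanSpace ℝ (Fin d)))
    [IsProbabilityMeasure pplus] [IsProbabilityMeasure pminus]
    (h2plus : Integrable (fun x => ‖x‖ ^ 2) pplus)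
    (h2minus : Integrable (fun x => ‖x‖ ^ 2) pminus)
    (μplus μminus : EuclideanSpace ℝ (Fin d))
    (hμplus : μplus = ∫ x, x ∂pplus)
    (hμminus : μminus = ∫ x, x ∂pminus)
    (α β : ℝ) (hα0 : 0 < α) (hα1 : α < 1) (hβ : 0 < β)
    (μmid Δ : EuclideanSpace ℝ (Fin d))
    (hμmid : μmid = α • μplus + (1 - α) • μminus)
    (hΔ : Δ = α • (μplus - μmid))
    (F : EuclideanSpace ℝ (Fin d) → ℝ)
    (hF : ∀ v, F v =
      α * ∫ x, ‖(1 - β) • μmid + β • v - x‖ ^ 2 ∂pplus +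
      (1 - α) * ∫ x, ‖(1 + β) • μmid - β • v - x‖ ^ 2 ∂pminus)
    (vstar : EuclideanSpace ℝ (Fin d))
    (hvstar : vstar = μmid + (2 / β) • Δ) :
    ∀ v, F vstar ≤ F v ∧ (F v = F vstar ↔ v = vstar) :=
  optimal_predictor_general d pplus pminus h2plus h2minus μplus μminus hμplus hμminus α β hβ μmid Δ
    hμmid hΔ F hF vstar hvstar
end
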